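/- Each application of the refutation rule strictly decreases rank: if Z = {l∨C_1,...,l∨C_m, l*∨D_1,...,l*∨D_n} ∪ E with m,n ≥ 1, where neither l nor l* occurs in any clause of E or in any C_i or D_j, then the rank of {C_1,...,C_m} ∪ E is strictly less than the rank of Z. -/

import Mathlib

/-- Propositional formulas over variables indexed by naturals. -/
inductive PropForm where
  | var : Nat → PropForm
  | fls : PropForm
  | tru : PropForm
  | neg : PropForm → PropForm
  | conj : PropForm → PropForm → PropForm
  | disj : PropForm → PropForm → PropForm
deriving DecidableEq

/-- Classical Boolean evaluation of a formula under a valuation. -/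
def PropForm.eval (v : Nat → Bool) : PropForm → Bool
  | .var n => v n
  | .fls => false
  | .tru => true
  | .neg A => !(A.eval v)
  | .conj A B => A.eval v && B.eval v
  | .disj A B => A.eval v || B.eval v

/-- The propositional variables occurring in a formula. -/
def PropForm.vars : PropForm → Finset Nat
  | .var n => {n}
  | .fls => ∅
  | .tru => ∅
  | .neg A => A.vars
  | .conj A B => A.vars ∪ B.vars
  | .disj A B => A.vars ∪ B.vars

/-- A formula is valid iff true under every valuation. -/
def PropForm.Valid (A : PropForm) : Prop := ∀ v : Nat → Bool, A.eval v = true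

/-- Literals: a variable or its negation. -/
inductive Lit where
  | pos : Nat → Lit
  | neg : Nat → Lit
deriving DecidableEq

/-- The complement of a literal. -/
def Lit.compl : Lit → Lit
  | .pos n => .neg n
  | .neg n => .pos n

/-- The variable of a literal. -/
def Lit.var : Lit → Nat
  | .pos n => n
  | .neg n => n

/-- Evaluation of a literal. -/
def Lit.eval (v : Nat → Bool) : Lit → Bool
  | .pos n => v n
  | .neg n => !(v n)

/-- A literal as a formula. -/
def Lit.toForm : Lit → PropForm
  | .pos n => .var n
  | .neg n => .neg (.var n)

/-- A clause (finite set of literals read disjunctively) is satisfied by `v`. -/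
def clauseSat (v : Nat → Bool) (C : Finset Lit) : Prop := ∃ l ∈ C, l.eval v = true

/-- A conjunction of literals (finite set read conjunctively) is satisfied by `v`. -/
def cubeSat (v : Nat → Bool) (C : Finset Lit) : Prop := ∀ l ∈ C, l.eval v = true

/-- The rank of a finite set of clauses: the number of literals `l` such that
`l` occurs in some clause of `Z` and `l.compl` occurs in a different clause. -/
noncomputable def rank (Z : Finset (Finset Lit)) : ℕ :=
  Set.ncard {l : Lit | ∃ C₁ ∈ Z, ∃ C₂ ∈ Z, C₁ ≠ C₂ ∧ l ∈ C₁ ∧ l.compl ∈ C₂}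

/-!
Every clause of `{C₁,…,Cₘ} ∪ E` sits inside a distinct clause of `Z` (send `Cᵢ` to `l ∨ Cᵢ`,
keep `E`), so every clash of the smaller set is a clash of `Z`. The literal `l` clashes in `Z`
(between `l ∨ C₁` and `l* ∨ D₁`) but occurs in no clause of the smaller set.
-/

def clashingLits (Z : Finset (Finset Lit)) : Set Lit :=
  {l | ∃ C₁ ∈ Z, ∃ C₂ ∈ Z, C₁ ≠ C₂ ∧ l ∈ C₁ ∧ l.compl ∈ C₂}

theorem rank_eq_ncard_clashingLits (Z : Finset (Finset Lit)) :
    rank Z = (clashingLits Z).ncard := rfl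

theorem Lit.compl_ne_self (l : Lit) : l.compl ≠ l := by
  cases l <;> simp [Lit.compl]

theorem clashingLits_finite (Z : Finset (Finset Lit)) : (clashingLits Z).Finite :=
  (Z.finite_toSet.biUnion fun C _ => C.finite_toSet).subset
    fun _ ⟨_, hC₁, _, _, _, hl, _⟩ => Set.mem_biUnion hC₁ hl

theorem mem_clashingLits_of_notMem {Z : Finset (Finset Lit)} {l : Lit} {C₁ C₂ : Finset Lit}
    (hC₁ : C₁ ∈ Z) (hC₂ : C₂ ∈ Z) (hl₁ : l ∈ C₁) (hl₂ : l.compl ∈ C₂) (hl : l ∉ C₂) :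
    l ∈ clashingLits Z :=
  ⟨C₁, hC₁, C₂, hC₂, fun h => hl (h ▸ hl₁), hl₁, hl₂⟩

theorem clashingLits_subset_of_injOn {Z Z' : Finset (Finset Lit)} {f : Finset Lit → Finset Lit}
    (hmaps : Set.MapsTo f Z Z') (hinj : Set.InjOn f Z) (hsub : ∀ C ∈ Z, C ⊆ f C) :
    clashingLits Z ⊆ clashingLits Z' :=
  fun _ ⟨C₁, hC₁, C₂, hC₂, hne, hl₁, hl₂⟩ =>
    ⟨f C₁, hmaps hC₁, f C₂, hmaps hC₂, hne ∘ (hinj hC₁ hC₂ ·), hsub C₁ hC₁ hl₁, hsub C₂ hC₂ hl₂⟩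

theorem rank_lt_of_injOn {Z Z' : Finset (Finset Lit)} {f : Finset Lit → Finset Lit}
    (hmaps : Set.MapsTo f Z Z') (hinj : Set.InjOn f Z) (hsub : ∀ C ∈ Z, C ⊆ f C)
    {l : Lit} (hl : l ∈ clashingLits Z') (hlZ : ∀ C ∈ Z, l ∉ C) : rank Z < rank Z' := by
  rw [rank_eq_ncard_clashingLits, rank_eq_ncard_clashingLits]
  refine Set.ncard_lt_ncard ⟨clashingLits_subset_of_injOn hmaps hinj hsub, fun h => ?_⟩
    (clashingLits_finite Z')
  obtain ⟨C, hC, -, -, -, hlC, -⟩ := h hl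
  exact hlZ C hC hlC

theorem stmt11 (l : Lit) (Cs Ds E : Finset (Finset Lit))
    (hCsne : Cs.Nonempty) (hDsne : Ds.Nonempty)
    (hCs : ∀ C ∈ Cs, l ∉ C ∧ l.compl ∉ C)
    (hDs : ∀ D ∈ Ds, l ∉ D ∧ l.compl ∉ D)
    (hE : ∀ C ∈ E, l ∉ C ∧ l.compl ∉ C) :
    rank (Cs ∪ E) <
      rank (Cs.image (insert l) ∪ Ds.image (insert l.compl) ∪ E) := by
  have hlCE : ∀ C ∈ Cs ∪ E, l ∉ C := by
    simp only [Finset.mem_union]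
    rintro C (hC | hC)
    exacts [(hCs C hC).1, (hE C hC).1]
  -- The resolved clauses are sent back to their parent clauses `l ∨ Cᵢ`.
  let f : Finset Lit → Finset Lit := fun C => if C ∈ Cs then insert l C else C
  have hmaps : Set.MapsTo f ↑(Cs ∪ E) ↑(Cs.image (insert l) ∪ Ds.image (insert l.compl) ∪ E) := by
    intro C hC
    simp only [Finset.coe_union, Finset.coe_image, Set.mem_union, Set.mem_image, Finset.mem_coe,
      f] at hC ⊢
    split_ifs with h
    · exact Or.inl (Or.inl ⟨C, h, rfl⟩)
    · exact Or.inr (hC.resolve_left h)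
  have hinj : Set.InjOn f ↑(Cs ∪ E) := by
    refine Set.LeftInvOn.injOn (f₁' := (Finset.erase · l)) fun C hC => ?_
    by_cases h : C ∈ Cs
    · simp [f, h, Finset.erase_insert (hlCE C hC)]
    · simp [f, h, Finset.erase_eq_of_notMem (hlCE C hC)]
  have hsub : ∀ C ∈ Cs ∪ E, C ⊆ f C := fun C _ => by
    by_cases h : C ∈ Cs <;> simp [f, h, Finset.subset_insert]
  obtain ⟨C, hC⟩ := hCsne
  obtain ⟨D, hD⟩ := hDsne
  have hlD : l ∉ insert l.compl D :=
    Finset.mem_insert.not.2 (not_or.2 ⟨(Lit.compl_ne_self l).symm, (hDs D hD).1⟩)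
  refine rank_lt_of_injOn hmaps hinj hsub (mem_clashingLits_of_notMem ?_ ?_
    (Finset.mem_insert_self l C) (Finset.mem_insert_self _ D) hlD) hlCE
  · exact Finset.mem_union_left _ (Finset.mem_union_left _ (Finset.mem_image_of_mem _ hC))
  · exact Finset.mem_union_left _ (Finset.mem_union_right _ (Finset.mem_image_of_mem _ hD))
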